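/- arXiv:2306.05230 — 6 statements merged into one kernel-verified Lean document; each statement's English description precedes it below -/
import Mathlib

section
/- Let K be a simplicial complex on [m] and, for each i = 1,…,m, let T_i be a simplicial complex on [l_i]. Then the minimal missing faces of the composition complex K(T_1,…,T_m) are exactly the sets ⊔_{i∈L} J_i, where L ranges over the minimal missing faces of K and, for each i ∈ L, J_i ranges over the minimal missing faces of T_i. -/
/-!
A vertex set `F` of `K(T₁, …, Tₘ)` is determined by its fibers `F i`, and it is a face exactly
when its index set `N F = {i | F i ∉ T i}` is a face of `K`. Removing a vertex `⟨i, x⟩` only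
changes the fiber over `i`, so `N` can only lose or gain the index `i`. Since `K` is closed
under subsets, `F` is a minimal missing face exactly when `N F ∉ K`, every vertex of
`F` lies over `N F`, and removing a vertex over `i` turns `F i` into a face of `T i` and
`N F` into the face `(N F) \ {i}` of `K`: that is, `N F` is a minimal missing face of `K`
and each `F i` with `i ∈ N F` one of `T i`.
-/

open scoped Classical

/-- An abstract simplicial complex on the vertex type `V`: a collection of finite
subsets (its faces) containing the empty set and closed under taking subsets. -/
def IsComplex {V : Type*} (K : Set (Finset V)) : Prop :=
  ∅ ∈ K ∧ ∀ σ ∈ K, ∀ τ ⊆ σ, τ ∈ K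

/-- `σ` is a minimal missing face of `K`: it is not a face of `K`, but every proper
subset of it is a face of `K`. -/
def MinNonFace {V : Type*} (K : Set (Finset V)) (σ : Finset V) : Prop :=
  σ ∉ K ∧ ∀ τ ⊂ σ, τ ∈ K

/-- The composition complex `K(T 1, …, T m)`: the simplicial complex on the disjoint
union `[l 1] ⊔ ⋯ ⊔ [l m]` whose faces are the disjoint unions `σ 1 ⊔ ⋯ ⊔ σ m` with
`σ i ⊆ [l i]` for every `i` and `{i | σ i is not a face of T i}` a face of `K`. -/
def compFaces {m : ℕ} {l : Fin m → ℕ} (K : Set (Finset (Fin m)))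
    (T : ∀ i : Fin m, Set (Finset (Fin (l i)))) :
    Set (Finset ((j : Fin m) × Fin (l j))) :=
  {F | ∃ σ : ∀ i : Fin m, Finset (Fin (l i)),
    F = Finset.univ.biUnion (fun i => (σ i).image (Sigma.mk i)) ∧
    (Finset.univ.filter fun i => σ i ∉ T i) ∈ K}

theorem IsComplex.isLowerSet {V : Type*} {K : Set (Finset V)} (hK : IsComplex K) :
    IsLowerSet K :=
  fun _ _ hτσ hσ => hK.2 _ hσ _ hτσ

theorem minNonFace_iff_forall_erase_mem {V : Type*} [DecidableEq V] {K : Set (Finset V)}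
    (hK : IsLowerSet K) {σ : Finset V} :
    MinNonFace K σ ↔ σ ∉ K ∧ ∀ v ∈ σ, σ.erase v ∈ K := by
  refine and_congr_right fun _ =>
    ⟨fun h v hv => h _ (Finset.erase_ssubset hv), fun h τ hτ => ?_⟩
  obtain ⟨v, hv, hτv⟩ := Finset.ssubset_iff_exists_subset_erase.1 hτ
  exact hK hτv (h v hv)

section Sigma

open Finset

variable {ι : Type*} {α : ι → Type*}

section Fibers

noncomputable def sigmaFiber (F : Finset (Σ i, α i)) (i : ι) : Finset (α i) :=
  F.preimage (Sigma.mk i) sigma_mk_injective.injOn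

@[simp]
theorem mem_sigmaFiber {F : Finset (Σ i, α i)} {i : ι} {x : α i} :
    x ∈ sigmaFiber F i ↔ ⟨i, x⟩ ∈ F :=
  mem_preimage

theorem sigmaFiber_mono {F G : Finset (Σ i, α i)} (hGF : G ⊆ F) (i : ι) :
    sigmaFiber G i ⊆ sigmaFiber F i :=
  fun _ hx => mem_sigmaFiber.2 (hGF (mem_sigmaFiber.1 hx))

theorem Finset.sigma_eq_biUnion_image [DecidableEq (Σ i, α i)] (L : Finset ι)
    (J : ∀ i, Finset (α i)) :
    L.sigma J = L.biUnion fun i => (J i).image (Sigma.mk i) := by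
  simp only [sigma_eq_biUnion, map_eq_image]
  rfl

variable [DecidableEq ι]

theorem sigmaFiber_sigma (L : Finset ι) (J : ∀ i, Finset (α i)) (i : ι) :
    sigmaFiber (L.sigma J) i = if i ∈ L then J i else ∅ := by
  ext x
  split_ifs with hi <;> simp [hi]

variable [∀ i, DecidableEq (α i)]

theorem sigmaFiber_erase_self (F : Finset (Σ i, α i)) (i : ι) (x : α i) :
    sigmaFiber (F.erase ⟨i, x⟩) i = (sigmaFiber F i).erase x := by
  ext y
  simp

theorem sigmaFiber_erase_of_ne (F : Finset (Σ i, α i)) {i j : ι} (hji : j ≠ i) (x : α i) :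
    sigmaFiber (F.erase ⟨i, x⟩) j = sigmaFiber F j := by
  ext y
  simp [hji]

end Fibers

section NonFaceIndices

variable [Fintype ι] (T : ∀ i, Set (Finset (α i)))

/-- The index set `{i | σ i ∉ T i}` in the definition of the composition complex,
for `F = ⊔ σ i`. -/
noncomputable def nonFaceIndices (F : Finset (Σ i, α i)) : Finset ι :=
  univ.filter fun i => sigmaFiber F i ∉ T i

variable {T}

@[simp]
theorem mem_nonFaceIndices {F : Finset (Σ i, α i)} {i : ι} :
    i ∈ nonFaceIndices T F ↔ sigmaFiber F i ∉ T i := by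
  simp [nonFaceIndices]

theorem nonFaceIndices_mono (hT : ∀ i, IsLowerSet (T i)) {F G : Finset (Σ i, α i)}
    (hGF : G ⊆ F) : nonFaceIndices T G ⊆ nonFaceIndices T F := by
  intro i
  simp only [mem_nonFaceIndices]
  exact mt (hT i (sigmaFiber_mono hGF i))

variable [DecidableEq ι]

theorem nonFaceIndices_sigma {L : Finset ι} {J : ∀ i, Finset (α i)} (hT : ∀ i, ∅ ∈ T i)
    (hJ : ∀ i ∈ L, J i ∉ T i) : nonFaceIndices T (L.sigma J) = L := by
  ext i
  rw [mem_nonFaceIndices, sigmaFiber_sigma]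
  split_ifs with hi
  · exact iff_of_true (hJ i hi) hi
  · exact iff_of_false (not_not.2 (hT i)) hi

variable [∀ i, DecidableEq (α i)]

theorem nonFaceIndices_erase (F : Finset (Σ i, α i)) (i : ι) (x : α i) :
    nonFaceIndices T (F.erase ⟨i, x⟩) =
      if (sigmaFiber F i).erase x ∈ T i then (nonFaceIndices T F).erase i
      else insert i (nonFaceIndices T F) := by
  ext j
  obtain rfl | hji := eq_or_ne j i
  · split_ifs with h <;> simp [sigmaFiber_erase_self, h]
  · split_ifs <;> simp [sigmaFiber_erase_of_ne F hji, hji]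

end NonFaceIndices

end Sigma

section Composition

variable {m : ℕ} {l : Fin m → ℕ} {K : Set (Finset (Fin m))}
  {T : ∀ i : Fin m, Set (Finset (Fin (l i)))}

theorem mem_compFaces {F : Finset ((j : Fin m) × Fin (l j))} :
    F ∈ compFaces K T ↔ nonFaceIndices T F ∈ K := by
  simp only [compFaces, Set.mem_ofPred_eq, ← Finset.sigma_eq_biUnion_image]
  constructor
  · rintro ⟨σ, rfl, hσ⟩
    simpa [nonFaceIndices, sigmaFiber_sigma] using hσ
  · intro hF
    refine ⟨sigmaFiber F, ?_, hF⟩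
    exact (Finset.sigma_preimage_mk_of_subset F (Finset.subset_univ _)).symm

theorem isLowerSet_compFaces (hK : IsLowerSet K) (hT : ∀ i, IsLowerSet (T i)) :
    IsLowerSet (compFaces K T) := fun _ _ hGF hF =>
  mem_compFaces.2 (hK (nonFaceIndices_mono hT hGF) (mem_compFaces.1 hF))

theorem MinNonFace.compFaces_erase_vertex (hK : IsLowerSet K)
    {F : Finset ((j : Fin m) × Fin (l j))} (hF : MinNonFace (compFaces K T) F)
    {i : Fin m} {x : Fin (l i)} (hx : ⟨i, x⟩ ∈ F) :
    i ∈ nonFaceIndices T F ∧ (sigmaFiber F i).erase x ∈ T i ∧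
      (nonFaceIndices T F).erase i ∈ K := by
  have hN : nonFaceIndices T F ∉ K := fun h => hF.1 (mem_compFaces.2 h)
  have hErase := mem_compFaces.1 (hF.2 _ (Finset.erase_ssubset hx))
  rw [nonFaceIndices_erase] at hErase
  split_ifs at hErase with hFiber
  · refine ⟨by_contra fun hi => hN ?_, hFiber, hErase⟩
    rwa [Finset.erase_eq_of_notMem hi] at hErase
  · exact absurd (hK (Finset.subset_insert _ _) hErase) hN

theorem MinNonFace.compFaces_decompose (hK : IsLowerSet K) (hT : ∀ i, IsComplex (T i))
    {F : Finset ((j : Fin m) × Fin (l j))} (hF : MinNonFace (compFaces K T) F) :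
    MinNonFace K (nonFaceIndices T F) ∧
      (∀ i ∈ nonFaceIndices T F, MinNonFace (T i) (sigmaFiber F i)) ∧
      F = (nonFaceIndices T F).sigma (sigmaFiber F) := by
  have hFiber : ∀ i ∈ nonFaceIndices T F, ∃ x, ⟨i, x⟩ ∈ F := fun i hi => by
    obtain ⟨x, hx⟩ : (sigmaFiber F i).Nonempty := Finset.nonempty_iff_ne_empty.2
      fun h => mem_nonFaceIndices.1 hi (h ▸ (hT i).1)
    exact ⟨x, mem_sigmaFiber.1 hx⟩
  have hIndices : MinNonFace K (nonFaceIndices T F) := by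
    refine (minNonFace_iff_forall_erase_mem hK).2 ⟨fun h => hF.1 (mem_compFaces.2 h), ?_⟩
    intro i hi
    obtain ⟨x, hx⟩ := hFiber i hi
    exact (hF.compFaces_erase_vertex hK hx).2.2
  have hFibers : ∀ i ∈ nonFaceIndices T F, MinNonFace (T i) (sigmaFiber F i) := fun i hi =>
    (minNonFace_iff_forall_erase_mem (hT i).isLowerSet).2 ⟨mem_nonFaceIndices.1 hi,
      fun x hx => (hF.compFaces_erase_vertex hK (mem_sigmaFiber.1 hx)).2.1⟩
  have hSupport : F.image Sigma.fst ⊆ nonFaceIndices T F := by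
    intro i hi
    obtain ⟨⟨i, x⟩, hx, rfl⟩ := Finset.mem_image.1 hi
    exact (hF.compFaces_erase_vertex hK hx).1
  exact ⟨hIndices, hFibers, (Finset.sigma_preimage_mk_of_subset F hSupport).symm⟩

theorem MinNonFace.compFaces_sigma (hK : IsLowerSet K) (hT : ∀ i, IsComplex (T i))
    {L : Finset (Fin m)} (hL : MinNonFace K L) {J : ∀ i, Finset (Fin (l i))}
    (hJ : ∀ i ∈ L, MinNonFace (T i) (J i)) : MinNonFace (compFaces K T) (L.sigma J) := by
  have hN : nonFaceIndices T (L.sigma J) = L :=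
    nonFaceIndices_sigma (fun i => (hT i).1) fun i hi => (hJ i hi).1
  rw [minNonFace_iff_forall_erase_mem (isLowerSet_compFaces hK fun i => (hT i).isLowerSet),
    mem_compFaces, hN]
  refine ⟨hL.1, fun ⟨i, x⟩ hx => ?_⟩
  obtain ⟨hi, hx⟩ := Finset.mem_sigma.1 hx
  have hFiber : (sigmaFiber (L.sigma J) i).erase x ∈ T i := by
    rw [sigmaFiber_sigma, if_pos hi]
    exact (hJ i hi).2 _ (Finset.erase_ssubset hx)
  rw [mem_compFaces, nonFaceIndices_erase, if_pos hFiber, hN]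
  exact hL.2 _ (Finset.erase_ssubset hi)

end Composition

/-- The minimal missing faces of the composition complex `K(T 1, …, T m)` are exactly
the disjoint unions `⊔_{i ∈ L} J i` where `L` is a minimal missing face of `K` and,
for each `i ∈ L`, `J i` is a minimal missing face of `T i`. -/
theorem minNonFace_comp {m : ℕ} {l : Fin m → ℕ} (K : Set (Finset (Fin m)))
    (T : ∀ i : Fin m, Set (Finset (Fin (l i))))
    (hK : IsComplex K) (hT : ∀ i, IsComplex (T i))
    (F : Finset ((j : Fin m) × Fin (l j))) :
    MinNonFace (compFaces K T) F ↔
      ∃ L : Finset (Fin m), MinNonFace K L ∧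
        ∃ J : ∀ i : Fin m, Finset (Fin (l i)),
          (∀ i ∈ L, MinNonFace (T i) (J i)) ∧
          F = L.biUnion fun i => (J i).image (Sigma.mk i) := by
  simp_rw [← Finset.sigma_eq_biUnion_image]
  constructor
  · intro hF
    obtain ⟨hL, hJ, hFL⟩ := hF.compFaces_decompose hK.isLowerSet hT
    exact ⟨_, hL, _, hJ, hFL⟩
  · rintro ⟨L, hL, J, hJ, rfl⟩
    exact hL.compFaces_sigma hK.isLowerSet hT hJ
end

section
/- Let K be a simplicial complex on [m] and let ψ : I → J be a fold of [m]. If L' is a simplicial complex on [m] such that L'_{∇(I,J)} ⊆ K_{∇(I,J)} (every face of the fold of L' is a face of the fold of K), then L' ⊆ L_ψ (every face of L' is a face of L_ψ). -/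
open scoped Classical

/-- `ψ` (already extended to all of `V` by the identity off `I`) is a fold of the
vertex set with disjoint source `I` and target `J`, surjective from `I` onto `J`. -/
def IsFold {V : Type*} (I J : Finset V) (ψ : V → V) : Prop :=
  Disjoint I J ∧ (∀ v ∈ I, ψ v ∈ J) ∧ (∀ v ∉ I, ψ v = v) ∧ ∀ w ∈ J, ∃ v ∈ I, ψ v = w

/-- The folded complex of `K` under the extended fold map `ψ`: its faces are exactly
the images `ψ(σ)` of faces `σ` of `K`. -/
def foldFaces {V : Type*} [DecidableEq V] (K : Set (Finset V)) (f : V → V) :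
    Set (Finset V) :=
  {τ | ∃ σ ∈ K, τ = σ.image f}

/-- The complex `L_ψ = K_{∇(I,J)}⟨Δ[{k_1} ⊔ I_{k_1}], …, Δ[{k_l} ⊔ I_{k_l}]⟩` on `[m]`:
substitution of the full simplices on the blocks `{t} ⊔ ψ⁻¹(t)` (for `t ∈ [m]∖I`)
into the folded complex `K_{∇(I,J)}`. Its faces are the unions `⊔_{t ∈ [m]∖I} σ t`
with `σ t ⊆ {t} ⊔ ψ⁻¹(t)` and `{t ∈ [m]∖I | σ t ≠ ∅}` a face of `K_{∇(I,J)}`. -/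
def LpsiFaces {m : ℕ} (K : Set (Finset (Fin m))) (I : Finset (Fin m))
    (ψ : Fin m → Fin m) : Set (Finset (Fin m)) :=
  {F | ∃ σ : Fin m → Finset (Fin m),
    (∀ t ∉ I, σ t ⊆ insert t (I.filter fun w => ψ w = t)) ∧
    F = (Finset.univ \ I).biUnion σ ∧
    ((Finset.univ \ I).filter fun t => (σ t).Nonempty) ∈ foldFaces K ψ}

/-! Given a face `F` of `L'`, cut it into the fibres `F ∩ ψ⁻¹(t)` over the vertices `t ∉ I`.
Since `ψ` is the identity off `I`, each fibre lies in the block `{t} ⊔ I_t`; since `ψ` sends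
no vertex into `I` (as `ψ(I) ⊆ J` and `I ∩ J = ∅`), the fibres cover `F`;
and the fibres that are nonempty are indexed by exactly `ψ(F)`, which is a face of `K_{∇(I,J)}` by hypothesis. -/

lemma Finset.filter_fiber_nonempty_eq_image {α β : Type*} [DecidableEq β] {s : Finset α}
    {t : Finset β} {f : α → β} (h : ∀ x ∈ s, f x ∈ t) :
    t.filter (fun b => (s.filter (f · = b)).Nonempty) = s.image f := by
  ext b
  rw [Finset.mem_filter, Finset.fiber_nonempty_iff_mem_image, and_iff_right_iff_imp]
  intro hb
  obtain ⟨x, hx, rfl⟩ := Finset.mem_image.mp hb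
  exact h x hx

namespace IsFold

variable {V : Type*} {I J : Finset V} {ψ : V → V}

lemma apply_of_notMem (hψ : IsFold I J ψ) {v : V} (hv : v ∉ I) : ψ v = v :=
  hψ.2.2.1 v hv

lemma apply_notMem (hψ : IsFold I J ψ) (v : V) : ψ v ∉ I := by
  by_cases hv : v ∈ I
  · exact Finset.disjoint_right.mp hψ.1 (hψ.2.1 v hv)
  · rwa [hψ.apply_of_notMem hv]

lemma mem_insert_fiber [DecidableEq V] (hψ : IsFold I J ψ) (v : V) :
    v ∈ insert (ψ v) (I.filter fun w => ψ w = ψ v) := by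
  by_cases hv : v ∈ I
  · exact Finset.mem_insert_of_mem (Finset.mem_filter.mpr ⟨hv, rfl⟩)
  · rw [hψ.apply_of_notMem hv]
    exact Finset.mem_insert_self v _

end IsFold

theorem mem_LpsiFaces_of_image_mem {m : ℕ} {K : Set (Finset (Fin m))} {I J : Finset (Fin m)}
    {ψ : Fin m → Fin m} (hψ : IsFold I J ψ) {F : Finset (Fin m)}
    (hF : F.image ψ ∈ foldFaces K ψ) : F ∈ LpsiFaces K I ψ := by
  have hmaps : ∀ v ∈ F, ψ v ∈ Finset.univ \ I := fun v _ =>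
    Finset.mem_sdiff.mpr ⟨Finset.mem_univ _, hψ.apply_notMem v⟩
  refine ⟨fun t => F.filter (ψ · = t), ?_, ?_, ?_⟩
  · rintro t - v hv
    obtain ⟨-, rfl⟩ := Finset.mem_filter.mp hv
    exact hψ.mem_insert_fiber v
  · exact (Finset.biUnion_filter_eq_of_maps_to hmaps).symm
  · rwa [Finset.filter_fiber_nonempty_eq_image hmaps]

theorem subcomplex_of_fold_subset_general {m : ℕ} (K L' : Set (Finset (Fin m)))
    (I J : Finset (Fin m)) (ψ : Fin m → Fin m) (hψ : IsFold I J ψ)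
    (h : foldFaces L' ψ ⊆ foldFaces K ψ) :
    L' ⊆ LpsiFaces K I ψ :=
  fun F hF => mem_LpsiFaces_of_image_mem hψ (h ⟨F, hF, rfl⟩)

/-- If `L'` is a simplicial complex on `[m]` whose fold `L'_{∇(I,J)}` is contained in
`K_{∇(I,J)}`, then `L' ⊆ L_ψ`. -/
theorem subcomplex_of_fold_subset {m : ℕ} (K L' : Set (Finset (Fin m)))
    (hK : IsComplex K) (hL' : IsComplex L')
    (I J : Finset (Fin m)) (ψ : Fin m → Fin m) (hψ : IsFold I J ψ)
    (h : foldFaces L' ψ ⊆ foldFaces K ψ) :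
    L' ⊆ LpsiFaces K I ψ :=
  subcomplex_of_fold_subset_general K L' I J ψ hψ h
end

section
/- Let k ≥ 2, let Π = {P_1,…,P_k} be a k-partition of [m], and let ψ : I → J be a fold of [m] with I = {u} ⊆ P_i and J = {v} ⊆ P_j for some i ≠ j. Then the folded identity complex is (K_Π)_{∇(u,v)} = ∂Δ[[m]∖{u}], the boundary of the simplex on [m]∖{u}; that is, the faces of (K_Π)_{∇(u,v)} are exactly the proper subsets of [m]∖{u}. -/
open scoped Classical

/-- The identity complex `K_Π` of a `k`-partition `Π = {P 1, …, P k}` of `[m]`: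
`σ ⊆ [m]` is a face if and only if at most `k - 2` of the parts `P i` satisfy
`P i ⊆ σ`. -/
def KPiFaces {m k : ℕ} (P : Fin k → Finset (Fin m)) : Set (Finset (Fin m)) :=
  {σ | (Finset.univ.filter fun i => P i ⊆ σ).card ≤ k - 2}

/-!
A face of `K_Π` is a set missing vertices of two different parts. If a face `σ` folded onto all of
`[m] ∖ {u}`, then `σ` would miss at most one vertex (`u` when `u ∉ σ`, otherwise `v`), so all parts
but one would lie in `σ`. Conversely, a proper subset `F` of `[m] ∖ {u}` misses `u` and some `x`;
since `u` and `v` lie in different parts, either `F` itself or `F` with `v` traded for `u` is a face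
that folds onto `F`.
-/

section Fold

variable {V : Type*} [DecidableEq V] {u v w : V} {σ F : Finset V}

theorem mem_image_fold :
    w ∈ σ.image (fun x => if x = u then v else x) ↔ (w = v ∧ u ∈ σ) ∨ (w ≠ u ∧ w ∈ σ) := by
  simp only [Finset.mem_image]
  constructor
  · rintro ⟨x, hx, rfl⟩
    split_ifs with hxu
    · exact Or.inl ⟨rfl, hxu ▸ hx⟩
    · exact Or.inr ⟨hxu, hx⟩
  · rintro (⟨rfl, hu⟩ | ⟨hwu, hw⟩)
    · exact ⟨u, hu, if_pos rfl⟩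
    · exact ⟨w, hw, if_neg hwu⟩

theorem image_fold_of_notMem (hu : u ∉ σ) :
    σ.image (fun x => if x = u then v else x) = σ := by
  ext w
  rw [mem_image_fold]
  constructor
  · rintro (⟨-, h⟩ | ⟨-, h⟩)
    · exact absurd h hu
    · exact h
  · exact fun hw => Or.inr ⟨fun h => hu (h ▸ hw), hw⟩

theorem image_fold_insert_erase (hu : u ∉ F) (hv : v ∈ F) :
    (insert u (F.erase v)).image (fun x => if x = u then v else x) = F := by
  ext w
  rw [mem_image_fold]
  by_cases hwv : w = v
  · subst hwv
    simp [hv]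
  · by_cases hwu : w = u
    · subst hwu
      simp [hu, hwv]
    · simp [hwu, hwv]

theorem notMem_image_fold (hvu : v ≠ u) : u ∉ σ.image (fun x => if x = u then v else x) := by
  rw [mem_image_fold]
  rintro (⟨h, -⟩ | ⟨h, -⟩)
  · exact hvu h.symm
  · exact h rfl

theorem exists_forall_ne_mem_of_image_fold_eq_erase [Fintype V]
    (h : σ.image (fun x => if x = u then v else x) = Finset.univ.erase u) :
    ∃ x, ∀ w, w ≠ x → w ∈ σ := by
  have hσ : ∀ w, w ≠ u → (w = v ∧ u ∈ σ) ∨ w ∈ σ := fun w hwu => by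
    have := mem_image_fold.1 (h ▸ Finset.mem_erase.2 ⟨hwu, Finset.mem_univ w⟩)
    tauto
  by_cases huσ : u ∈ σ
  · refine ⟨v, fun w hwv => ?_⟩
    by_cases hwu : w = u
    · exact hwu ▸ huσ
    · exact (hσ w hwu).resolve_left fun h => hwv h.1
  · exact ⟨u, fun w hwu => (hσ w hwu).resolve_left fun h => huσ h.2⟩

end Fold

section IdentityComplex

variable {m k : ℕ} {P : Fin k → Finset (Fin m)} {σ : Finset (Fin m)}

theorem mem_KPiFaces_iff (hk : 2 ≤ k) :
    σ ∈ KPiFaces P ↔ ∃ a b, a ≠ b ∧ ¬ P a ⊆ σ ∧ ¬ P b ⊆ σ := by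
  have hsplit := Finset.card_filter_add_card_filter_not
    (s := (Finset.univ : Finset (Fin k))) (fun a => P a ⊆ σ)
  rw [Finset.card_univ, Fintype.card_fin] at hsplit
  have hcard : σ ∈ KPiFaces P ↔ 1 < (Finset.univ.filter fun a => ¬ P a ⊆ σ).card := by
    change _ ≤ k - 2 ↔ _
    omega
  simp only [hcard, Finset.one_lt_card, Finset.mem_filter, Finset.mem_univ, true_and]
  constructor
  · rintro ⟨a, ha, b, hb, hab⟩
    exact ⟨a, b, hab, ha, hb⟩
  · rintro ⟨a, b, hab, ha, hb⟩
    exact ⟨a, ha, b, hb, hab⟩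

theorem mem_KPiFaces_of_notMem (hk : 2 ≤ k) {a b : Fin k} {x y : Fin m} (hab : a ≠ b)
    (hx : x ∈ P a) (hxσ : x ∉ σ) (hy : y ∈ P b) (hyσ : y ∉ σ) : σ ∈ KPiFaces P :=
  (mem_KPiFaces_iff hk).2 ⟨a, b, hab, fun h => hxσ (h hx), fun h => hyσ (h hy)⟩

theorem notMem_KPiFaces_of_forall_ne_mem (hk : 2 ≤ k)
    (hdisj : ∀ i j, i ≠ j → Disjoint (P i) (P j)) (x : Fin m) (hσ : ∀ w, w ≠ x → w ∈ σ) :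
    σ ∉ KPiFaces P := by
  rw [mem_KPiFaces_iff hk]
  rintro ⟨a, b, hab, ha, hb⟩
  -- every part not contained in `σ` must contain the only missing vertex `x`
  have mem_of_not_subset : ∀ c, ¬ P c ⊆ σ → x ∈ P c := fun c hc => by
    obtain ⟨w, hwc, hwσ⟩ := Finset.not_subset.1 hc
    rwa [← not_imp_comm.1 (hσ w) hwσ]
  exact Finset.disjoint_left.1 (hdisj a b hab) (mem_of_not_subset a ha) (mem_of_not_subset b hb)

end IdentityComplex

theorem foldKPi_single_across_parts_general {m k : ℕ} (hk : 2 ≤ k)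
    (P : Fin k → Finset (Fin m))
    (hdisj : ∀ i j, i ≠ j → Disjoint (P i) (P j))
    (hcov : Finset.univ.biUnion P = Finset.univ)
    (u v : Fin m) (i j : Fin k) (hij : i ≠ j) (hu : u ∈ P i) (hv : v ∈ P j)
    (F : Finset (Fin m)) :
    F ∈ foldFaces (KPiFaces P) (fun w => if w = u then v else w) ↔
      F ⊂ Finset.univ.erase u := by
  have hvu : v ≠ u := fun h => Finset.disjoint_left.1 (hdisj i j hij) hu (h ▸ hv)
  constructor
  · rintro ⟨σ, hσ, rfl⟩
    refine Finset.ssubset_iff_subset_ne.2 ⟨fun w hw => ?_, fun hF => ?_⟩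
    · exact Finset.mem_erase.2 ⟨ne_of_mem_of_not_mem hw (notMem_image_fold hvu), Finset.mem_univ w⟩
    · obtain ⟨x, hx⟩ := exists_forall_ne_mem_of_image_fold_eq_erase hF
      exact notMem_KPiFaces_of_forall_ne_mem hk hdisj x hx hσ
  · intro hF
    have huF : u ∉ F := fun h => (Finset.mem_erase.1 (hF.subset h)).1 rfl
    obtain ⟨x, hx, hxF⟩ := Finset.exists_of_ssubset hF
    obtain ⟨l, -, hxl⟩ := Finset.mem_biUnion.1 (hcov ▸ Finset.mem_univ x)
    -- `F` is its own preimage and misses `u` and `x`; if these lie in the same part, use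
    -- `v ∉ F` instead, or, when `v ∈ F`, the preimage that trades `v` for `u`
    by_cases hli : l = i
    · subst hli
      by_cases hvF : v ∈ F
      · refine ⟨insert u (F.erase v), ?_, (image_fold_insert_erase huF hvF).symm⟩
        refine mem_KPiFaces_of_notMem hk hij hxl ?_ hv ?_ <;>
          simp [(Finset.mem_erase.1 hx).1, hxF, hvu]
      · exact ⟨F, mem_KPiFaces_of_notMem hk hij hxl hxF hv hvF, (image_fold_of_notMem huF).symm⟩
    · exact ⟨F, mem_KPiFaces_of_notMem hk hli hxl hxF hu huF, (image_fold_of_notMem huF).symm⟩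

/-- If `I = {u} ⊆ P i` and `J = {v} ⊆ P j` with `i ≠ j`, then the folded identity
complex is `(K_Π)_{∇(u,v)} = ∂Δ[[m]∖{u}]`: its faces are exactly the proper subsets
of `[m]∖{u}`. -/
theorem foldKPi_single_across_parts {m k : ℕ} (hk : 2 ≤ k)
    (P : Fin k → Finset (Fin m))
    (hne : ∀ i, (P i).Nonempty)
    (hdisj : ∀ i j, i ≠ j → Disjoint (P i) (P j))
    (hcov : Finset.univ.biUnion P = Finset.univ)
    (u v : Fin m) (i j : Fin k) (hij : i ≠ j) (hu : u ∈ P i) (hv : v ∈ P j)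
    (F : Finset (Fin m)) :
    F ∈ foldFaces (KPiFaces P) (fun w => if w = u then v else w) ↔
      F ⊂ Finset.univ.erase u :=
  foldKPi_single_across_parts_general hk P hdisj hcov u v i j hij hu hv F
end

section
/- Let L be a simplicial complex on [m] and let K_1,…,K_m be simplicial complexes on [l_1],…,[l_m], respectively, and set [l] = [l_1] ⊔ ⋯ ⊔ [l_m]. Let ψ : I → J be a fold of [l] such that ψ(I ∩ [l_i]) ⊆ [l_i] for each i = 1,…,m. Then folding commutes with substitution: (L⟨K_1,…,K_m⟩)_{∇(I,J)} = L⟨(K_1)',…,(K_m)'⟩, where (K_i)' = (K_i)_{∇(I ∩ [l_i], ψ(I ∩ [l_i]))} is the fold of K_i under the restriction of ψ, with the convention (K_i)' = K_i when I ∩ [l_i] = ∅. -/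
open scoped Classical

/-- The substitution complex `L⟨S 1, …, S m⟩` on the disjoint union
`[l 1] ⊔ ⋯ ⊔ [l m]`: its faces are the disjoint unions `σ 1 ⊔ ⋯ ⊔ σ m` with `σ i`
a face of `S i` for every `i` and `{i | σ i ≠ ∅}` a face of `L`. -/
def substFaces {m : ℕ} {l : Fin m → ℕ} (L : Set (Finset (Fin m)))
    (S : ∀ i : Fin m, Set (Finset (Fin (l i)))) :
    Set (Finset ((j : Fin m) × Fin (l j))) :=
  {F | ∃ σ : ∀ i : Fin m, Finset (Fin (l i)),
    (∀ i, σ i ∈ S i) ∧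
    F = Finset.univ.biUnion (fun i => (σ i).image (Sigma.mk i)) ∧
    (Finset.univ.filter fun i => (σ i).Nonempty) ∈ L}

/-
The fold acts fibrewise, `ψ = Sigma.map id ψc`. The image of a disjoint
union `σ 1 ⊔ ⋯ ⊔ σ m` under such a map is `ψc 1 (σ 1) ⊔ ⋯ ⊔ ψc m (σ m)`, and `ψc i (σ i)`
is empty exactly when `σ i` is, so the pattern `{i | σ i ≠ ∅}` that has to lie in `L` is
unchanged. Hence the faces on both sides are parametrised by the same families `σ`.
-/

theorem Finset.image_sigmaMap_biUnion {ι : Type*} {α : ι → Type*} [DecidableEq ι]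
    [∀ i, DecidableEq (α i)] (s : Finset ι) (σ : ∀ i, Finset (α i)) (f : ∀ i, α i → α i) :
    (s.biUnion fun i => (σ i).image (Sigma.mk i)).image (Sigma.map id f) =
      s.biUnion fun i => ((σ i).image (f i)).image (Sigma.mk i) := by
  simp only [Finset.biUnion_image, Finset.image_image]
  rfl

theorem foldFaces_substFaces_sigmaMap {m : ℕ} {l : Fin m → ℕ} (L : Set (Finset (Fin m)))
    (K : ∀ i : Fin m, Set (Finset (Fin (l i)))) (f : ∀ i : Fin m, Fin (l i) → Fin (l i)) :
    foldFaces (substFaces L K) (Sigma.map id f) =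
      substFaces L (fun i => foldFaces (K i) (f i)) := by
  ext F
  constructor
  · rintro ⟨_, ⟨σ, hσK, rfl, hσL⟩, rfl⟩
    refine ⟨fun i => (σ i).image (f i), fun i => ⟨σ i, hσK i, rfl⟩,
      Finset.image_sigmaMap_biUnion _ _ _, ?_⟩
    simpa only [Finset.image_nonempty] using hσL
  · rintro ⟨_, hσ, rfl, hσL⟩
    choose τ hτK hτ using hσ
    obtain rfl : _ = fun i => (τ i).image (f i) := funext hτ
    refine ⟨Finset.univ.biUnion fun i => (τ i).image (Sigma.mk i), ⟨τ, hτK, rfl, ?_⟩,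
      (Finset.image_sigmaMap_biUnion _ _ _).symm⟩
    simpa only [Finset.image_nonempty] using hσL

theorem fold_subst_comm_general {m : ℕ} {l : Fin m → ℕ} (L : Set (Finset (Fin m)))
    (K : ∀ i : Fin m, Set (Finset (Fin (l i))))
    (ψ : ((j : Fin m) × Fin (l j)) → ((j : Fin m) × Fin (l j)))
    (ψc : ∀ i : Fin m, Fin (l i) → Fin (l i))
    (hcomp : ∀ v : (j : Fin m) × Fin (l j), ψ v = ⟨v.1, ψc v.1 v.2⟩) :
    foldFaces (substFaces L K) ψ =
      substFaces L (fun i => foldFaces (K i) (ψc i)) := by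
  obtain rfl : ψ = Sigma.map id ψc := funext hcomp
  exact foldFaces_substFaces_sigmaMap L K ψc

/-- Folding commutes with substitution: for a fold `ψ` of `[l] = [l 1] ⊔ ⋯ ⊔ [l m]`
which maps `I ∩ [l i]` into `[l i]` for each `i` (encoded by component maps `ψc i`
with `ψ ⟨i, x⟩ = ⟨i, ψc i x⟩`), the fold of the substitution complex
`L⟨K 1, …, K m⟩` equals the substitution `L⟨(K 1)', …, (K m)'⟩` of the folds
`(K i)'` of the `K i` under the restrictions of `ψ`. -/
theorem fold_subst_comm {m : ℕ} {l : Fin m → ℕ} (L : Set (Finset (Fin m)))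
    (K : ∀ i : Fin m, Set (Finset (Fin (l i))))
    (hL : IsComplex L) (hK : ∀ i, IsComplex (K i))
    (I J : Finset ((j : Fin m) × Fin (l j)))
    (ψ : ((j : Fin m) × Fin (l j)) → ((j : Fin m) × Fin (l j)))
    (hψ : IsFold I J ψ)
    (ψc : ∀ i : Fin m, Fin (l i) → Fin (l i))
    (hcomp : ∀ v : (j : Fin m) × Fin (l j), ψ v = ⟨v.1, ψc v.1 v.2⟩) :
    foldFaces (substFaces L K) ψ =
      substFaces L (fun i => foldFaces (K i) (ψc i)) :=
  fold_subst_comm_general L K ψ ψc hcomp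
end

section
/- Let m ≥ 3, let K_1,…,K_m be simplicial complexes on [l_1],…,[l_m], respectively, let Π = {{1},{2,…,m−1},{m}} be the 3-partition of [m], and set S_Π = K_Π⟨K_1,…,K_m⟩. Suppose ψ : [l_m] → [l_1] is an injection which is an isomorphism of K_m onto the full subcomplex of K_1 on ψ([l_m]); that is, for every σ ⊆ [l_m], σ is a face of K_m if and only if ψ(σ) is a face of K_1. Let I = [l_m] and J = ψ([l_m]). Then the fold of S_Π is the substitution into the boundary of a simplex: (S_Π)_{∇(I,J)} = ∂Δ⟨K_1,…,K_{m−1}⟩, where ∂Δ is the boundary of the simplex on m−1 vertices. -/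
open scoped Classical

/-- The three parts of the partition `Π = {{1}, {2, …, m−1}, {m}}` of `[m]`, where
`i0` is the first vertex and `iL` the last vertex of `[m]`. -/
def part3 (m : ℕ) (i0 iL : Fin m) : Fin 3 → Finset (Fin m)
  | 0 => {i0}
  | 1 => Finset.univ \ {i0, iL}
  | 2 => {iL}

/-- The identity complex `K_Π` for the `3`-partition `Π = {{1}, {2, …, m−1}, {m}}`:
`σ ⊆ [m]` is a face if and only if at most `1 = k − 2` of the three parts are
contained in `σ`. -/
def KPi3 (m : ℕ) (i0 iL : Fin m) : Set (Finset (Fin m)) :=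
  {σ | (Finset.univ.filter fun t : Fin 3 => part3 m i0 iL t ⊆ σ).card ≤ 1}

/-! The fold sends a face `σ_1 ⊔ ⋯ ⊔ σ_m` of `S_Π` to the family with `σ_1 ∪ ψ(σ_m)` in
position `1`, nothing in position `m` and `σ_i` elsewhere. As `{1}` and `{m}` are parts of `Π`,
at most one of `σ_1`, `σ_m` is nonempty, so the new first entry is a face of `K_1` (through `ψ`),
and the new support is the image of the old one under `m ↦ 1`; it misses `m`, and it cannot contain
all of `[m - 1]` since `K_Π` forbids the middle part together with `{1}` or `{m}`. Conversely, a
face of `∂Δ⟨K_1, …, K_{m−1}⟩` has empty last entry, so it is fixed by the fold, and its support is a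
face of `K_Π`. -/

section Fold

open Finset

variable {ι : Type*} [DecidableEq ι] {α : ι → Type*}

def sigmaFold (i0 iL : ι) (ψ : α iL → α i0) (v : Σ i, α i) : Σ i, α i :=
  if h : v.1 = iL then ⟨i0, ψ (cast (congrArg α h) v.2)⟩ else v

def foldFamily {i0 : ι} [DecidableEq (α i0)] (iL : ι) (ψ : α iL → α i0)
    (σ : ∀ i, Finset (α i)) : ∀ i, Finset (α i) :=
  Function.update (Function.update σ iL ∅) i0 (σ i0 ∪ (σ iL).image ψ)

variable {i0 iL : ι} {ψ : α iL → α i0}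

@[simp] lemma sigmaFold_mk_self (v : α iL) : sigmaFold i0 iL ψ ⟨iL, v⟩ = ⟨i0, ψ v⟩ := by
  simp [sigmaFold]

@[simp] lemma sigmaFold_mk_of_ne {j : ι} (hj : j ≠ iL) (v : α j) :
    sigmaFold i0 iL ψ ⟨j, v⟩ = ⟨j, v⟩ := by
  simp [sigmaFold, hj]

section foldFamily

variable [DecidableEq (α i0)] (σ : ∀ i, Finset (α i))

@[simp] lemma foldFamily_apply_target : foldFamily iL ψ σ i0 = σ i0 ∪ (σ iL).image ψ :=
  Function.update_self ..

@[simp] lemma foldFamily_apply_source (hne : i0 ≠ iL) : foldFamily iL ψ σ iL = ∅ := by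
  rw [foldFamily, Function.update_of_ne hne.symm, Function.update_self]

@[simp] lemma foldFamily_apply_of_ne {i : ι} (hi0 : i ≠ i0) (hiL : i ≠ iL) :
    foldFamily iL ψ σ i = σ i := by
  rw [foldFamily, Function.update_of_ne hi0, Function.update_of_ne hiL]

lemma foldFamily_of_eq_empty {σ : ∀ i, Finset (α i)} (h : σ iL = ∅) :
    foldFamily iL ψ σ = σ := by
  rw [foldFamily, h, image_empty, union_empty, ← h, Function.update_eq_self,
    Function.update_eq_self]

lemma foldFamily_mem {K : ∀ i, Set (Finset (α i))} (hσ : ∀ i, σ i ∈ K i) (hne : i0 ≠ iL)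
    (hK : ∅ ∈ K iL) (hψ : ∀ s ∈ K iL, s.image ψ ∈ K i0) (h : σ i0 = ∅ ∨ σ iL = ∅) (i : ι) :
    foldFamily iL ψ σ i ∈ K i := by
  rcases eq_or_ne i i0 with rfl | hi0
  · rcases h with h | h
    · simpa [h] using hψ _ (hσ iL)
    · simpa [h] using hσ i
  rcases eq_or_ne i iL with rfl | hiL
  · simpa [hne] using hK
  · simpa [hi0, hiL] using hσ i

lemma filter_foldFamily_nonempty [Fintype ι] (hne : i0 ≠ iL) :
    univ.filter (fun i => (foldFamily iL ψ σ i).Nonempty) =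
      (univ.filter fun i => (σ i).Nonempty).image (fun i => if i = iL then i0 else i) := by
  ext i
  simp only [mem_filter, mem_univ, true_and, mem_image]
  rcases eq_or_ne i iL with rfl | hiL
  · simp only [foldFamily_apply_source σ hne, Finset.not_nonempty_empty, false_iff, not_exists,
      not_and]
    intro a _ ha
    split_ifs at ha with h
    exacts [hne ha, h ha]
  rcases eq_or_ne i i0 with rfl | hi0
  · simp only [foldFamily_apply_target, union_nonempty, image_nonempty]
    constructor
    · rintro (h | h)
      · exact ⟨i, h, if_neg hiL⟩
      · exact ⟨iL, h, if_pos rfl⟩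
    · rintro ⟨a, ha, hai⟩
      split_ifs at hai with h
      exacts [Or.inr (h ▸ ha), Or.inl (hai ▸ ha)]
  · rw [foldFamily_apply_of_ne σ hi0 hiL]
    constructor
    · exact fun h => ⟨i, h, if_neg hiL⟩
    · rintro ⟨a, ha, hai⟩
      split_ifs at hai with h
      exacts [(hi0 hai.symm).elim, hai ▸ ha]

end foldFamily

variable [Fintype ι] [∀ i, DecidableEq (α i)]

lemma biUnion_image_sigmaMk (σ : ∀ i, Finset (α i)) :
    univ.biUnion (fun i => (σ i).image (Sigma.mk i)) = univ.sigma σ := by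
  ext ⟨j, v⟩
  simp only [mem_biUnion, mem_image, mem_univ, true_and, Sigma.mk.injEq, mem_sigma]
  constructor
  · rintro ⟨_, w, hw, rfl, hwv⟩
    exact eq_of_heq hwv ▸ hw
  · exact fun h => ⟨j, v, h, rfl, HEq.rfl⟩

lemma mem_image_sigmaFold_iff (σ : ∀ i, Finset (α i)) (y : Σ i, α i) :
    y ∈ (univ.sigma σ).image (sigmaFold i0 iL ψ) ↔
      (y.1 ≠ iL ∧ y ∈ univ.sigma σ) ∨ ∃ w ∈ σ iL, ⟨i0, ψ w⟩ = y := by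
  rw [mem_image]
  constructor
  · rintro ⟨⟨j, w⟩, hw, rfl⟩
    by_cases hj : j = iL
    · subst hj
      exact Or.inr ⟨w, by simpa using hw, (sigmaFold_mk_self w).symm⟩
    · exact Or.inl (by simpa [hj] using hw)
  · rintro (⟨hy, hyσ⟩ | ⟨w, hw, rfl⟩)
    · obtain ⟨j, v⟩ := y
      exact ⟨_, hyσ, sigmaFold_mk_of_ne hy v⟩
    · exact ⟨⟨iL, w⟩, by simpa using hw, sigmaFold_mk_self w⟩

lemma image_sigmaFold_sigma (hne : i0 ≠ iL) (σ : ∀ i, Finset (α i)) :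
    (univ.sigma σ).image (sigmaFold i0 iL ψ) = univ.sigma (foldFamily iL ψ σ) := by
  ext ⟨j, v⟩
  rw [mem_image_sigmaFold_iff]
  rcases eq_or_ne j iL with rfl | hjL
  · simp [hne]
  rcases eq_or_ne j i0 with rfl | hj0
  · simp [hjL]
  · simp [hj0, hjL, hj0.symm]

end Fold

section KPi3

open Finset

variable {m : ℕ} {i0 iL : Fin m} {τ : Finset (Fin m)}

lemma mem_KPi3_iff :
    τ ∈ KPi3 m i0 iL ↔ ¬(i0 ∈ τ ∧ iL ∈ τ) ∧ (i0 ∈ τ ∨ iL ∈ τ → ¬univ \ {i0, iL} ⊆ τ) := by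
  simp only [KPi3, Set.mem_ofPred_eq, card_le_one, mem_filter, mem_univ, true_and,
    Fin.forall_fin_succ]
  simp [part3]
  tauto

lemma image_ssubset_erase_of_mem_KPi3 (hne : i0 ≠ iL) (hτ : τ ∈ KPi3 m i0 iL) :
    τ.image (fun i => if i = iL then i0 else i) ⊂ univ.erase iL := by
  rw [mem_KPi3_iff] at hτ
  refine Finset.ssubset_iff_subset_ne.mpr ⟨fun j hj => ?_, fun heq => ?_⟩
  · obtain ⟨i, -, rfl⟩ := mem_image.mp hj
    refine mem_erase.mpr ⟨?_, mem_univ _⟩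
    split_ifs with h
    exacts [hne, h]
  · have hmem : ∀ j ≠ iL, ∃ i ∈ τ, (if i = iL then i0 else i) = j := fun j hj =>
      mem_image.mp (heq ▸ mem_erase.mpr ⟨hj, mem_univ j⟩)
    refine hτ.2 ?_ fun j hj => ?_
    · obtain ⟨i, hi, hi0⟩ := hmem i0 hne
      split_ifs at hi0 with h
      exacts [Or.inr (h ▸ hi), Or.inl (hi0 ▸ hi)]
    · simp only [mem_sdiff, mem_univ, mem_insert, mem_singleton, not_or, true_and] at hj
      obtain ⟨i, hi, hij⟩ := hmem j hj.2
      split_ifs at hij with h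
      exacts [(hj.1 hij.symm).elim, hij ▸ hi]

lemma mem_KPi3_of_ssubset_erase (hτ : τ ⊂ univ.erase iL) : τ ∈ KPi3 m i0 iL := by
  have hL : iL ∉ τ := fun h => by simpa using hτ.subset h
  refine mem_KPi3_iff.mpr ⟨fun h => hL h.2, fun h hB => not_subset_of_ssubset hτ fun i hi => ?_⟩
  by_cases hi0 : i = i0
  · exact hi0 ▸ h.resolve_right hL
  · exact hB (by simp_all)

end KPi3

theorem fold_SPi_eq_subst_boundary_general {m : ℕ} (hm : 3 ≤ m) {l : Fin m → ℕ}
    (i0 iL : Fin m) (hi0 : (i0 : ℕ) = 0) (hiL : (iL : ℕ) = m - 1)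
    (K : ∀ i : Fin m, Set (Finset (Fin (l i)))) (hK : ∀ i, IsComplex (K i))
    (ψ : Fin (l iL) → Fin (l i0))
    (hiso : ∀ σ : Finset (Fin (l iL)), σ ∈ K iL ↔ σ.image ψ ∈ K i0) :
    foldFaces (substFaces (KPi3 m i0 iL) K)
        (fun v => if h : v.1 = iL then
            ⟨i0, ψ (cast (congrArg (fun i => Fin (l i)) h) v.2)⟩
          else v) =
      substFaces {τ : Finset (Fin m) | τ ⊂ Finset.univ.erase iL} K := by
  have hne : i0 ≠ iL := fun h => by rw [← Fin.val_inj, hi0, hiL] at h; omega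
  change foldFaces _ (sigmaFold (α := fun i => Fin (l i)) i0 iL ψ) = _
  ext F
  simp only [foldFaces, substFaces, biUnion_image_sigmaMk, Set.mem_ofPred_eq]
  constructor
  · rintro ⟨_, ⟨σ, hσK, rfl, hσ⟩, rfl⟩
    have hdisj : σ i0 = ∅ ∨ σ iL = ∅ := by
      by_contra! h
      exact (mem_KPi3_iff.mp hσ).1 ⟨by simpa using h.1, by simpa using h.2⟩
    refine ⟨foldFamily iL ψ σ, foldFamily_mem σ hσK hne (hK iL).1 (fun s => (hiso s).1) hdisj,
      image_sigmaFold_sigma hne σ, ?_⟩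
    rw [filter_foldFamily_nonempty σ hne]
    exact image_ssubset_erase_of_mem_KPi3 hne hσ
  · rintro ⟨σ, hσK, rfl, hσ⟩
    have hσL : σ iL = ∅ := by
      by_contra h
      have := hσ.subset (Finset.mem_filter.mpr
        ⟨Finset.mem_univ iL, Finset.nonempty_iff_ne_empty.mpr h⟩)
      simp at this
    exact ⟨_, ⟨σ, hσK, rfl, mem_KPi3_of_ssubset_erase hσ⟩,
      by rw [image_sigmaFold_sigma hne, foldFamily_of_eq_empty hσL]⟩

/-- If `ψ : [l m] → [l 1]` is an isomorphism of `K m` onto a full subcomplex of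
`K 1`, and `I = [l m]`, `J = ψ([l m])`, then the fold of
`S_Π = K_Π⟨K 1, …, K m⟩` is `(S_Π)_{∇(I,J)} = ∂Δ⟨K 1, …, K (m−1)⟩`, the
substitution of `K 1, …, K (m−1)` into the boundary of the simplex on `m − 1`
vertices. -/
theorem fold_SPi_eq_subst_boundary {m : ℕ} (hm : 3 ≤ m) {l : Fin m → ℕ}
    (i0 iL : Fin m) (hi0 : (i0 : ℕ) = 0) (hiL : (iL : ℕ) = m - 1)
    (K : ∀ i : Fin m, Set (Finset (Fin (l i)))) (hK : ∀ i, IsComplex (K i))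
    (ψ : Fin (l iL) → Fin (l i0))
    (hinj : Function.Injective ψ)
    (hiso : ∀ σ : Finset (Fin (l iL)), σ ∈ K iL ↔ σ.image ψ ∈ K i0) :
    foldFaces (substFaces (KPi3 m i0 iL) K)
        (fun v => if h : v.1 = iL then
            ⟨i0, ψ (cast (congrArg (fun i => Fin (l i)) h) v.2)⟩
          else v) =
      substFaces {τ : Finset (Fin m) | τ ⊂ Finset.univ.erase iL} K :=
  fold_SPi_eq_subst_boundary_general hm i0 iL hi0 hiL K hK ψ hiso
end

section
/- Let m ≥ 3, let K_1,…,K_m be simplicial complexes on [l_1],…,[l_m], respectively, and let Π = {{1},{2,…,m−1},{m}} be the 3-partition of [m]. Then the substitution of K_1,…,K_m into the identity complex K_Π equals the substitution of K_1 ⊔ K_m, K_2,…,K_{m−1} into the boundary of the simplex on m−1 vertices: K_Π⟨K_1,…,K_m⟩ = ∂Δ⟨K_1 ⊔ K_m, K_2,…,K_{m−1}⟩, where K_1 ⊔ K_m denotes the disjoint union complex on [l_1] ⊔ [l_m] (whose faces are the faces of K_1 together with the faces of K_m) and it is substituted into the first vertex of ∂Δ. -/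
open scoped Classical

/-- The restriction of a subset `F` of the disjoint union `[l 1] ⊔ ⋯ ⊔ [l m]`
to its `i`-th part. -/
def proj {m : ℕ} {l : Fin m → ℕ} (i : Fin m)
    (F : Finset ((j : Fin m) × Fin (l j))) : Finset (Fin (l i)) :=
  Finset.univ.filter fun x => (⟨i, x⟩ : (j : Fin m) × Fin (l j)) ∈ F

/-- The complex `K i` on `[l i]`, regarded as a complex on the ambient disjoint union
`[l 1] ⊔ ⋯ ⊔ [l m]`: its faces are the subsets supported on the `i`-th part whose
restriction to that part is a face of `K i`. -/
def fiberFaces {m : ℕ} {l : Fin m → ℕ} (i : Fin m)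
    (Ki : Set (Finset (Fin (l i)))) : Set (Finset ((j : Fin m) × Fin (l j))) :=
  {F | (∀ v ∈ F, v.1 = i) ∧ proj i F ∈ Ki}

/-- The substitution complex `L⟨S t⟩_{t : α}` of complexes `S t` (given on a common
ambient vertex type `V`, with pairwise disjoint supports) into a complex `L` on the
index type `α`: its faces are the unions `⊔_{t} σ t` with `σ t` a face of `S t` for
every `t` and `{t | σ t ≠ ∅}` a face of `L`. -/
def substBlocks {α V : Type*} [Fintype α] [DecidableEq V]
    (L : Set (Finset α)) (S : α → Set (Finset V)) : Set (Finset V) :=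
  {F | ∃ σ : α → Finset V, (∀ t, σ t ∈ S t) ∧ F = Finset.univ.biUnion σ ∧
      (Finset.univ.filter fun t => (σ t).Nonempty) ∈ L}

/-! A face `F` of either complex is determined by its restrictions `proj i F`, which must be
faces of the `K i`; the ∂Δ side asks in addition, through `K 1 ⊔ K m`, that `F` not meet both
`[l 1]` and `[l m]`. What remains is a condition on the support `σ` of `F`, and at most one part
of `Π` lies in `σ` exactly when `σ` does not contain both ends and its image under the map
`[m] → [m−1]` merging the two ends is not all of `[m−1]`. -/

open Finset

theorem card_filter_fin_three_le_one_iff (p : Fin 3 → Prop) [DecidablePred p] :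
    (univ.filter p).card ≤ 1 ↔ ¬(p 0 ∧ p 1) ∧ ¬(p 0 ∧ p 2) ∧ ¬(p 1 ∧ p 2) := by
  simp only [card_le_one, mem_filter, mem_univ, true_and, Fin.forall_fin_succ, Fin.isValue,
    Fin.succ_zero_eq_one, Fin.succ_one_eq_two, IsEmpty.forall_iff, and_true, implies_true,
    zero_ne_one, imp_false, Fin.reduceEq, Fin.succ_ne_zero, not_and]
  tauto

section Substitution

variable {m : ℕ} {l : Fin m → ℕ}

theorem mem_proj {i : Fin m} {F : Finset ((j : Fin m) × Fin (l j))} {x : Fin (l i)} :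
    x ∈ proj i F ↔ ⟨i, x⟩ ∈ F := by
  simp [proj]

theorem proj_biUnion_image (σ : ∀ i, Finset (Fin (l i))) (i : Fin m) :
    proj i (univ.biUnion fun j => (σ j).image (Sigma.mk j)) = σ i := by
  ext x
  simp only [mem_proj, mem_biUnion, mem_univ, true_and, mem_image, Sigma.mk.injEq]
  constructor
  · rintro ⟨_, _, hx, rfl, ⟨⟩⟩
    exact hx
  · exact fun hx => ⟨i, x, hx, rfl, .rfl⟩

theorem biUnion_image_proj (F : Finset ((j : Fin m) × Fin (l j))) :
    univ.biUnion (fun i => (proj i F).image (Sigma.mk i)) = F := by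
  ext ⟨i, x⟩
  simp only [mem_biUnion, mem_univ, true_and, mem_image, mem_proj]
  constructor
  · rintro ⟨_, _, hx, h⟩
    cases h
    exact hx
  · exact fun hx => ⟨i, x, hx, rfl⟩

theorem mem_substFaces_iff {L : Set (Finset (Fin m))} {S : ∀ i, Set (Finset (Fin (l i)))}
    {F : Finset ((j : Fin m) × Fin (l j))} :
    F ∈ substFaces L S ↔
      (∀ i, proj i F ∈ S i) ∧ univ.filter (fun i => (proj i F).Nonempty) ∈ L := by
  constructor
  · rintro ⟨σ, hσ, rfl, hL⟩
    simpa only [proj_biUnion_image] using ⟨hσ, hL⟩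
  · rintro ⟨hS, hL⟩
    exact ⟨fun i => proj i F, hS, (biUnion_image_proj F).symm, hL⟩

theorem proj_filter_fst (p : Fin m → Prop) [DecidablePred p] (i : Fin m)
    (F : Finset ((j : Fin m) × Fin (l j))) :
    proj i (F.filter fun v => p v.1) = if p i then proj i F else ∅ := by
  ext x
  split_ifs <;> simp [mem_proj, *]

theorem mem_fiberFaces_iff {i : Fin m} {Ki : Set (Finset (Fin (l i)))}
    {G : Finset ((j : Fin m) × Fin (l j))} :
    G ∈ fiberFaces i Ki ↔ (∀ j ≠ i, proj j G = ∅) ∧ proj i G ∈ Ki := by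
  simp only [fiberFaces, Set.mem_ofPred_eq, eq_empty_iff_forall_notMem, mem_proj, Sigma.forall]
  refine and_congr_left' ⟨fun h j hj x hx => hj (h j x hx), fun h j x hx => ?_⟩
  by_contra hj
  exact h j hj x hx

theorem filter_fst_eq_mem_fiberFaces_iff {i : Fin m} {Ki : Set (Finset (Fin (l i)))}
    (F : Finset ((j : Fin m) × Fin (l j))) :
    F.filter (fun v => v.1 = i) ∈ fiberFaces i Ki ↔ proj i F ∈ Ki := by
  simp only [mem_fiberFaces_iff, proj_filter_fst (· = i), if_pos]
  exact and_iff_right fun j hj => if_neg hj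

theorem filter_mem_fiberFaces_union_iff {i j : Fin m} (hij : i ≠ j)
    {Ki : Set (Finset (Fin (l i)))} {Kj : Set (Finset (Fin (l j)))}
    (hKi : ∅ ∈ Ki) (hKj : ∅ ∈ Kj)
    (F : Finset ((k : Fin m) × Fin (l k))) :
    F.filter (fun v => v.1 = i ∨ v.1 = j) ∈ fiberFaces i Ki ∪ fiberFaces j Kj ↔
      proj i F ∈ Ki ∧ proj j F ∈ Kj ∧ ¬((proj i F).Nonempty ∧ (proj j F).Nonempty) := by
  have only_i : (∀ k ≠ i, k = i ∨ k = j → proj k F = ∅) ↔ proj j F = ∅ :=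
    ⟨fun h => h j hij.symm (.inr rfl), by rintro h k hk (rfl | rfl); exacts [absurd rfl hk, h]⟩
  have only_j : (∀ k ≠ j, k = i ∨ k = j → proj k F = ∅) ↔ proj i F = ∅ :=
    ⟨fun h => h i hij (.inl rfl), by rintro h k hk (rfl | rfl); exacts [h, absurd rfl hk]⟩
  simp only [Set.mem_union, mem_fiberFaces_iff, proj_filter_fst (fun k => k = i ∨ k = j),
    ite_eq_right_iff, true_or, or_true, if_true, only_i, only_j]
  constructor
  · rintro (⟨hj, hi⟩ | ⟨hi, hj⟩)
    · exact ⟨hi, hj ▸ hKj, fun h => h.2.ne_empty hj⟩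
    · exact ⟨hi ▸ hKi, hj, fun h => h.1.ne_empty hi⟩
  · rintro ⟨hi, hj, h⟩
    by_cases hne : (proj i F).Nonempty
    · exact .inl ⟨not_nonempty_iff_eq_empty.mp fun h' => h ⟨hne, h'⟩, hi⟩
    · exact .inr ⟨not_nonempty_iff_eq_empty.mp hne, hj⟩

theorem mem_substBlocks_iff {α V : Type*} [Fintype α] [DecidableEq α] [DecidableEq V]
    (block : V → α) {L : Set (Finset α)} {S : α → Set (Finset V)}
    (hS : ∀ t, ∀ G ∈ S t, ∀ v ∈ G, block v = t) {F : Finset V} :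
    F ∈ substBlocks L S ↔ (∀ t, F.filter (block · = t) ∈ S t) ∧
      univ.filter (fun t => (F.filter (block · = t)).Nonempty) ∈ L := by
  constructor
  · rintro ⟨σ, hσ, rfl, hL⟩
    have hσ_eq : ∀ t, (univ.biUnion σ).filter (block · = t) = σ t := by
      intro t
      ext v
      simp only [mem_filter, mem_biUnion, mem_univ, true_and]
      constructor
      · rintro ⟨⟨s, hv⟩, rfl⟩
        rwa [hS s _ (hσ s) v hv]
      · exact fun hv => ⟨⟨t, hv⟩, hS t _ (hσ t) v hv⟩
    simpa only [hσ_eq] using ⟨hσ, hL⟩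
  · rintro ⟨hS, hL⟩
    refine ⟨fun t => F.filter (block · = t), hS, ?_, hL⟩
    ext v
    simp

theorem filter_nonempty_filter_fst_eq_image {α : Type*} [Fintype α] [DecidableEq α]
    (f : Fin m → α) (F : Finset ((j : Fin m) × Fin (l j))) :
    univ.filter (fun t => (F.filter (fun v => f v.1 = t)).Nonempty) =
      (univ.filter fun j => (proj j F).Nonempty).image f := by
  ext t
  simp [Finset.Nonempty, mem_proj, Sigma.exists]

end Substitution

section MergeEnds

variable {m : ℕ}

def mergeEnds (i0 iL j : Fin m) : Option {i : Fin m // i ≠ i0 ∧ i ≠ iL} :=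
  if h : j ≠ i0 ∧ j ≠ iL then some ⟨j, h⟩ else none

variable {i0 iL : Fin m}

theorem mergeEnds_eq_none_iff {j : Fin m} : mergeEnds i0 iL j = none ↔ j = i0 ∨ j = iL := by
  simp only [mergeEnds, dite_eq_right_iff, reduceCtorEq, imp_false, not_and_or, not_not]

theorem mergeEnds_eq_some_iff {j : Fin m} {i : {i : Fin m // i ≠ i0 ∧ i ≠ iL}} :
    mergeEnds i0 iL j = some i ↔ j = i.1 := by
  unfold mergeEnds
  split_ifs with h
  · simp [Subtype.ext_iff]
  · simp only [false_iff]
    rintro rfl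
    exact h i.2

theorem image_mergeEnds_eq_univ_iff {σ : Finset (Fin m)} :
    σ.image (mergeEnds i0 iL) = univ ↔ (i0 ∈ σ ∨ iL ∈ σ) ∧ univ \ {i0, iL} ⊆ σ := by
  simp only [eq_univ_iff_forall, Option.forall, mem_image, mergeEnds_eq_none_iff,
    mergeEnds_eq_some_iff, Subtype.forall, subset_iff, mem_sdiff, mem_univ, true_and, mem_insert,
    mem_singleton, exists_eq_right, not_or, and_or_left, exists_or, ne_eq]

theorem mem_KPi3_iff_s19 {σ : Finset (Fin m)} :
    σ ∈ KPi3 m i0 iL ↔ ¬(i0 ∈ σ ∧ iL ∈ σ) ∧ σ.image (mergeEnds i0 iL) ≠ univ := by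
  rw [KPi3, Set.mem_ofPred_eq, card_filter_fin_three_le_one_iff]
  simp only [part3, singleton_subset_iff, ne_eq, image_mergeEnds_eq_univ_iff]
  tauto

theorem forall_iff_ends_and_middle (P : Fin m → Prop) :
    (∀ j, P j) ↔ P i0 ∧ P iL ∧ ∀ i : {i : Fin m // i ≠ i0 ∧ i ≠ iL}, P i.1 := by
  refine ⟨fun h => ⟨h i0, h iL, fun i => h i.1⟩, fun ⟨h0, hL, h⟩ j => ?_⟩
  by_cases hj : j ≠ i0 ∧ j ≠ iL
  · exact h ⟨j, hj⟩
  · rcases not_and_or.mp hj with hj | hj <;> rw [not_not.mp hj] <;> assumption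

end MergeEnds

/-- For `Π = {{1}, {2, …, m−1}, {m}}`, the substitution of `K 1, …, K m` into the
identity complex `K_Π` equals the substitution of `K 1 ⊔ K m, K 2, …, K (m−1)` into
the boundary `∂Δ` of the simplex on `m − 1` vertices, the disjoint union complex
`K 1 ⊔ K m` being substituted into the first vertex of `∂Δ`. -/
theorem subst_KPi3_eq_subst_boundary {m : ℕ} (hm : 3 ≤ m) {l : Fin m → ℕ}
    (i0 iL : Fin m) (hi0 : (i0 : ℕ) = 0) (hiL : (iL : ℕ) = m - 1)
    (K : ∀ i : Fin m, Set (Finset (Fin (l i)))) (hK : ∀ i, IsComplex (K i)) :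
    substFaces (KPi3 m i0 iL) K =
      substBlocks (α := Option {i : Fin m // i ≠ i0 ∧ i ≠ iL})
        {τ | τ ≠ Finset.univ}
        (fun t => match t with
          | none => fiberFaces i0 (K i0) ∪ fiberFaces iL (K iL)
          | some i => fiberFaces i.1 (K i.1)) := by
  have hne : i0 ≠ iL := fun h => by have := congrArg Fin.val h; omega
  ext F
  rw [mem_substFaces_iff, mem_substBlocks_iff (fun v => mergeEnds i0 iL v.1)]
  · simp only [filter_nonempty_filter_fst_eq_image, Option.forall, mem_KPi3_iff_s19,
      mergeEnds_eq_none_iff, mergeEnds_eq_some_iff, filter_fst_eq_mem_fiberFaces_iff,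
      filter_mem_fiberFaces_union_iff hne (hK i0).1 (hK iL).1,
      forall_iff_ends_and_middle (i0 := i0) (iL := iL), mem_filter, mem_univ, true_and,
      Set.mem_ofPred_eq]
    tauto
  · rintro (_ | i) G hG v hv
    · rcases hG with hG | hG <;> simp [mergeEnds_eq_none_iff, hG.1 v hv]
    · simp [mergeEnds_eq_some_iff, hG.1 v hv]
end
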